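/- Let H and G be real Hilbert spaces, let f : H → (−∞,∞] and g : G → (−∞,∞] be proper lower semicontinuous convex functions, let L : H → G be a nonzero bounded linear operator, let z ∈ H, r ∈ G, and suppose z belongs to the range of x ↦ ∂f(x) + L*(∂g(Lx − r)). Consider the primal problem minimize over x ∈ H of f(x) + g(Lx − r) − ⟨x, z⟩ and the dual problem minimize over v ∈ G of f*(z − L*v) + g*(v) + ⟨v, r⟩. Let (a_{1,n}), (b_{1,n}), (c_{1,n}) be absolutely summable sequences in H and (a_{2,n}), (b_{2,n}), (c_{2,n}) absolutely summable sequences in G, let x_0 ∈ H, v_0 ∈ G, ε ∈ (0, 1/(‖L‖+1)), let (γ_n) be a sequence in [ε, (1−ε)/‖L‖], and define for every n: y_{1,n} = x_n − γ_n(L*v_n + a_{1,n}); y_{2,n} = v_n + γ_n(L x_n + a_{2,n}); p_{1,n} = prox_{γ_n f}(y_{1,n} + γ_n z) + b_{1,n}; p_{2,n} = prox_{γ_n g*}(y_{2,n} − γ_n r) + b_{2,n}; q_{1,n} = p_{1,n} − γ_n(L*p_{2,n} + c_{1,n}); q_{2,n} = p_{2,n} + γ_n(L p_{1,n} + c_{2,n});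 x_{n+1} = x_n − y_{1,n} + q_{1,n}; v_{n+1} = v_n − y_{2,n} + q_{2,n}. Then there exist a solution x̄ of the primal problem and a solution v̄ of the dual problem with z − L*v̄ ∈ ∂f(x̄) and v̄ ∈ ∂g(Lx̄ − r), such that x_n ⇀ x̄, p_{1,n} ⇀ x̄, v_n ⇀ v̄, and p_{2,n} ⇀ v̄ (weak convergence); moreover x_n − p_{1,n} → 0 and v_n − p_{2,n} → 0 in norm. -/

import Mathlib

/-!
The iteration is Tseng's forward-backward-forward method, with summable errors, for the
monotone + skew inclusion `0 ∈ A q + B q` on `H ⊕₂ G`, where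
`A (x, v) = (∂f x - z) × (∂g* v + r)` and `B (x, v) = (L* v, -L x)`; the zeros of `A + B` are
the Kuhn–Tucker pairs, and these solve the primal and the dual problem.

Monotonicity of `A` and skewness of `B` make each exact step shrink the squared distance to
every zero by `(1 - (γ‖L‖)²) ‖x - p‖²`, so the inexact iterates are quasi-Fejér: their
distances to the zeros converge and `x n - p n → 0`. Weak cluster points exist by
Banach–Alaoglu and are zeros by a Minty-type argument through the resolvent (a contraction
fixed point), and Opial's argument makes the cluster point unique. Returning from
`L x - r ∈ ∂g* v` to `v ∈ ∂g (L x - r)` needs `g ≤ g**`, obtained by separating points from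
the closed convex epigraph of `g`.
-/

open scoped InnerProductSpace
open Filter Topology

/-- `J` is the resolvent `(Id + γ A)⁻¹` of `γ A`. -/
def IsResolvent {E : Type*} [AddCommGroup E] [Module ℝ E]
    (γ : ℝ) (A : E → Set E) (J : E → E) : Prop :=
  ∀ w, ∃ u ∈ A (J w), w = J w + γ • u

/-- Weak convergence of a sequence in an inner product space. -/
def WeakTendsto {H : Type*} [NormedAddCommGroup H] [InnerProductSpace ℝ H]
    (x : ℕ → H) (l : H) : Prop :=
  ∀ w : H, Filter.Tendsto (fun n => ⟪x n, w⟫_ℝ) Filter.atTop (nhds ⟪l, w⟫_ℝ)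

/-- A function `f : H → (−∞,∞]` (no value `⊥`, somewhere finite) is proper. -/
def ProperFn {H : Type*} (f : H → EReal) : Prop :=
  (∀ x, f x ≠ ⊥) ∧ ∃ x, f x ≠ ⊤

/-- Convexity of an extended-real-valued function. -/
def ConvexFn {H : Type*} [AddCommGroup H] [Module ℝ H] (f : H → EReal) : Prop :=
  ∀ x y : H, ∀ t : ℝ, t ∈ Set.Icc (0:ℝ) 1 →
    f (t • x + (1 - t) • y) ≤ (t : EReal) * f x + ((1 - t) : EReal) * f y

/-- The Fenchel conjugate `f*(u) = sup_x (⟪x,u⟫ − f x)`. -/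
noncomputable def conjFn {H : Type*} [NormedAddCommGroup H] [InnerProductSpace ℝ H]
    (f : H → EReal) (u : H) : EReal :=
  ⨆ x : H, ((⟪x, u⟫_ℝ : EReal) - f x)

/-- The convex subdifferential `∂f(x) = {u | ∀ y, ⟪y − x, u⟫ + f x ≤ f y}`. -/
def subdiff {H : Type*} [NormedAddCommGroup H] [InnerProductSpace ℝ H]
    (f : H → EReal) (x : H) : Set H :=
  {u : H | ∀ y : H, (⟪y - x, u⟫_ℝ : EReal) + f x ≤ f y}

lemma ConvexFn.convex_epigraph {E : Type*} [AddCommGroup E] [Module ℝ E] {φ : E → EReal}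
    (hφ : ConvexFn φ) : Convex ℝ {p : E × ℝ | φ p.1 ≤ p.2} := by
  rintro ⟨x, s⟩ (hx : φ x ≤ s) ⟨y, t⟩ (hy : φ y ≤ t) a b ha hb hab
  obtain rfl : b = 1 - a := by linarith
  calc φ (a • x + (1 - a) • y) ≤ a * φ x + ((1 - a : ℝ) : EReal) * φ y :=
        hφ x y a ⟨ha, by linarith⟩
    _ ≤ a * s + ((1 - a : ℝ) : EReal) * t := by gcongr
    _ = ((a • (x, s) + (1 - a) • (y, t) : E × ℝ).2 : EReal) := by simp

lemma LowerSemicontinuous.isClosed_epigraph_coe {X : Type*} [TopologicalSpace X] {φ : X → EReal}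
    (hφ : LowerSemicontinuous φ) : IsClosed {p : X × ℝ | φ p.1 ≤ p.2} :=
  hφ.isClosed_epigraph.preimage
    (continuous_fst.prodMk (continuous_coe_real_ereal.comp continuous_snd))

section ConvexAnalysis

variable {E : Type*} [NormedAddCommGroup E] [InnerProductSpace ℝ E]

lemma ProperFn.exists_eq_coe_of_mem_subdiff {φ : E → EReal} (hφ : ProperFn φ) {x u : E}
    (hu : u ∈ subdiff φ x) : ∃ a : ℝ, φ x = a := by
  obtain ⟨x₁, hx₁⟩ := hφ.2
  refine ⟨(φ x).toReal, (EReal.coe_toReal (fun htop => hx₁ ?_) (hφ.1 x)).symm⟩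
  simpa [htop] using hu x₁

lemma coe_inner_add_le_of_mem_subdiff {φ : E → EReal} {x u : E} (hu : u ∈ subdiff φ x)
    {a : ℝ} (ha : φ x = a) (y : E) : ((⟪y - x, u⟫_ℝ + a : ℝ) : EReal) ≤ φ y := by
  simpa [ha] using hu y

lemma le_conjFn (φ : E → EReal) (x u : E) : (⟪x, u⟫_ℝ : EReal) - φ x ≤ conjFn φ u :=
  le_iSup (fun x => (⟪x, u⟫_ℝ : EReal) - φ x) x

lemma conjFn_le_of_affine_le {φ : E → EReal} {s : E} {d : ℝ}
    (h : ∀ x, ((⟪x, s⟫_ℝ - d : ℝ) : EReal) ≤ φ x) : conjFn φ s ≤ d :=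
  iSup_le fun x => EReal.sub_le_of_le_add <| by
    have := add_le_add_right (h x) (d : EReal)
    rwa [← EReal.coe_add, add_sub_cancel] at this

lemma conjFn_eq_of_mem_subdiff {φ : E → EReal} {x u : E} (hu : u ∈ subdiff φ x) {a : ℝ}
    (ha : φ x = a) : conjFn φ u = ((⟪x, u⟫_ℝ - a : ℝ) : EReal) := by
  refine le_antisymm (conjFn_le_of_affine_le fun y => ?_) ?_
  · convert coe_inner_add_le_of_mem_subdiff hu ha y using 2
    rw [inner_sub_left]; ring
  · simpa [ha] using le_conjFn φ x u

lemma mem_subdiff_conjFn_of_mem_subdiff {φ : E → EReal} {x u : E} (hu : u ∈ subdiff φ x)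
    {a : ℝ} (ha : φ x = a) : x ∈ subdiff (conjFn φ) u := by
  intro y
  rw [conjFn_eq_of_mem_subdiff hu ha, ← EReal.coe_add]
  convert le_conjFn φ x y using 1
  rw [ha, ← EReal.coe_sub, inner_sub_left, real_inner_comm x y, real_inner_comm x u]
  ring_nf

lemma coe_le_of_forall_eq_coe {y : EReal} (hy : y ≠ ⊥) {a : ℝ}
    (h : ∀ t : ℝ, y = t → a ≤ t) : (a : EReal) ≤ y := by
  cases y using EReal.rec with
  | bot => exact absurd rfl hy
  | coe t => exact EReal.coe_le_coe_iff.2 (h t rfl)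
  | top => exact le_top

/-- Separating a point below the epigraph by a closed hyperplane: the hyperplane is either
the graph of an affine minorant, or vertical, separating the point from the domain. -/
lemma ProperFn.exists_affine_minorant_or_separated [CompleteSpace E] {φ : E → EReal}
    (hp : ProperFn φ) (hlsc : LowerSemicontinuous φ) (hcvx : ConvexFn φ) {w : E} {m : ℝ}
    (hm : (m : EReal) < φ w) :
    (∃ s d, (∀ x, ((⟪x, s⟫_ℝ - d : ℝ) : EReal) ≤ φ x) ∧ m < ⟪w, s⟫_ℝ - d) ∨
      ∃ s d, (∀ x, φ x ≠ ⊤ → ⟪x, s⟫_ℝ < d) ∧ d < ⟪w, s⟫_ℝ := by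
  obtain ⟨ψ, u, hψw, hψepi⟩ := geometric_hahn_banach_point_closed hcvx.convex_epigraph
    hlsc.isClosed_epigraph_coe (show (w, m) ∉ {p : E × ℝ | φ p.1 ≤ p.2} from not_le.2 hm)
  set s₀ := (InnerProductSpace.toDual ℝ E).symm (ψ.comp (ContinuousLinearMap.inl ℝ E ℝ))
  set c := ψ (0, 1)
  have hψ : ∀ x t, ψ (x, t) = ⟪x, s₀⟫_ℝ + c * t := fun x t => by
    rw [real_inner_comm, InnerProductSpace.toDual_symm_apply,
      show ((x, t) : E × ℝ) = (x, 0) + t • (0, 1) by simp, map_add, map_smul]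
    simp [c, mul_comm]
  have hsep : ∀ x (t : ℝ), φ x ≤ t → u < ⟪x, s₀⟫_ℝ + c * t := fun x t h =>
    hψ x t ▸ hψepi (x, t) h
  have hfin : ∀ x, φ x ≠ ⊤ → φ x = (φ x).toReal := fun x hx =>
    (EReal.coe_toReal hx (hp.1 x)).symm
  have hc : 0 ≤ c := by
    obtain ⟨x₀, hx₀⟩ := hp.2
    by_contra! hc
    set k := (⟪x₀, s₀⟫_ℝ + c * (φ x₀).toReal - u) / -c
    have hk : 0 ≤ k := div_nonneg (by linarith [hsep x₀ _ (hfin x₀ hx₀).le]) (by linarith)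
    have hck : c * k = -(⟪x₀, s₀⟫_ℝ + c * (φ x₀).toReal - u) := by
      simp only [k]; rw [div_neg, mul_neg, mul_div_cancel₀ _ hc.ne]
    have := hsep x₀ ((φ x₀).toReal + k)
      ((hfin x₀ hx₀).le.trans (by exact_mod_cast by linarith))
    linarith
  have hψw' : ⟪w, s₀⟫_ℝ + c * m < u := hψ w m ▸ hψw
  rcases hc.eq_or_lt with hc0 | hcpos
  · refine Or.inr ⟨-s₀, -u, fun x hx => ?_, ?_⟩
    · have := hsep x _ (hfin x hx).le
      simp only [inner_neg_right, ← hc0] at this ⊢; linarith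
    · simp only [inner_neg_right, ← hc0] at hψw' ⊢; linarith
  · have hval : ∀ y : E, ⟪y, (-c⁻¹) • s₀⟫_ℝ - -(u / c) = (u - ⟪y, s₀⟫_ℝ) / c := fun y => by
      rw [real_inner_smul_right]; field_simp; ring
    refine Or.inl ⟨(-c⁻¹) • s₀, -(u / c),
      fun x => coe_le_of_forall_eq_coe (hp.1 x) fun t ht => ?_, ?_⟩
    · rw [hval, div_le_iff₀ hcpos]; linarith [hsep x t ht.le]
    · rw [hval, lt_div_iff₀ hcpos]; linarith

lemma ProperFn.exists_affine_minorant [CompleteSpace E] {φ : E → EReal} (hp : ProperFn φ)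
    (hlsc : LowerSemicontinuous φ) (hcvx : ConvexFn φ) :
    ∃ s d, ∀ x, ((⟪x, s⟫_ℝ - d : ℝ) : EReal) ≤ φ x := by
  obtain ⟨x₀, hx₀⟩ := hp.2
  have hlt : (((φ x₀).toReal - 1 : ℝ) : EReal) < φ x₀ :=
    (EReal.coe_lt_coe_iff.2 (sub_one_lt _)).trans_eq (EReal.coe_toReal hx₀ (hp.1 x₀))
  rcases hp.exists_affine_minorant_or_separated hlsc hcvx hlt with
    ⟨s, d, h, -⟩ | ⟨s, d, h, hd⟩
  · exact ⟨s, d, h⟩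
  · exact absurd (h x₀ hx₀) hd.not_gt

lemma le_conjFn_conjFn_of_affine_le {φ : E → EReal} {s : E} {d : ℝ}
    (h : ∀ x, ((⟪x, s⟫_ℝ - d : ℝ) : EReal) ≤ φ x) (w : E) :
    ((⟪w, s⟫_ℝ - d : ℝ) : EReal) ≤ conjFn (conjFn φ) w := by
  refine le_trans ?_ (le_conjFn (conjFn φ) s w)
  rw [real_inner_comm, EReal.coe_sub]
  exact EReal.sub_le_sub le_rfl (conjFn_le_of_affine_le h)

/-- The nontrivial half of the Fenchel–Moreau theorem. -/
theorem ProperFn.le_conjFn_conjFn [CompleteSpace E] {φ : E → EReal} (hp : ProperFn φ)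
    (hlsc : LowerSemicontinuous φ) (hcvx : ConvexFn φ) (w : E) :
    φ w ≤ conjFn (conjFn φ) w := by
  by_contra! hlt
  obtain ⟨m, hm₁, hm₂⟩ := EReal.exists_between_coe_real hlt
  rcases hp.exists_affine_minorant_or_separated hlsc hcvx hm₂ with
    ⟨s, d, h, hd⟩ | ⟨s, d, h, hd⟩
  · exact (le_conjFn_conjFn_of_affine_le h w).not_gt (hm₁.trans (EReal.coe_lt_coe_iff.2 hd))
  · -- tilt an affine minorant along the vertical separating hyperplane until it passes above `m`
    obtain ⟨s₀, d₀, h₀⟩ := hp.exists_affine_minorant hlsc hcvx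
    set lam := |m - (⟪w, s₀⟫_ℝ - d₀)| / (⟪w, s⟫_ℝ - d)
    have hlam : 0 ≤ lam := div_nonneg (abs_nonneg _) (by linarith)
    have htilt : ∀ x, ((⟪x, s₀ + lam • s⟫_ℝ - (d₀ + lam * d) : ℝ) : EReal) ≤ φ x :=
      fun x => coe_le_of_forall_eq_coe (hp.1 x) fun t ht => by
        have h₁ := EReal.coe_le_coe_iff.1 (ht ▸ h₀ x)
        have h₂ := mul_le_mul_of_nonneg_left (h x (ht ▸ EReal.coe_ne_top t)).le hlam
        rw [inner_add_right, real_inner_smul_right]; linarith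
    have hval : m ≤ ⟪w, s₀ + lam • s⟫_ℝ - (d₀ + lam * d) := by
      have : lam * (⟪w, s⟫_ℝ - d) = |m - (⟪w, s₀⟫_ℝ - d₀)| :=
        div_mul_cancel₀ _ (by linarith)
      rw [inner_add_right, real_inner_smul_right]
      linarith [le_abs_self (m - (⟪w, s₀⟫_ℝ - d₀))]
    exact (le_conjFn_conjFn_of_affine_le htilt w).not_gt
      (hm₁.trans_le (EReal.coe_le_coe_iff.2 hval))

lemma ProperFn.conjFn [CompleteSpace E] {φ : E → EReal} (hp : ProperFn φ)
    (hlsc : LowerSemicontinuous φ) (hcvx : ConvexFn φ) : ProperFn (conjFn φ) := by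
  obtain ⟨x₀, hx₀⟩ := hp.2
  obtain ⟨s, d, h⟩ := hp.exists_affine_minorant hlsc hcvx
  refine ⟨fun u hu => ?_, s, ((conjFn_le_of_affine_le h).trans_lt (EReal.coe_lt_top d)).ne⟩
  have := le_conjFn φ x₀ u
  rw [hu, le_bot_iff, ← EReal.coe_toReal hx₀ (hp.1 x₀), ← EReal.coe_sub] at this
  exact EReal.coe_ne_bot _ this

theorem mem_subdiff_of_mem_subdiff_conjFn [CompleteSpace E] {φ : E → EReal} (hp : ProperFn φ)
    (hlsc : LowerSemicontinuous φ) (hcvx : ConvexFn φ) {u x : E}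
    (hx : x ∈ subdiff (conjFn φ) u) : u ∈ subdiff φ x := by
  obtain ⟨δ, hδ⟩ := (hp.conjFn hlsc hcvx).exists_eq_coe_of_mem_subdiff hx
  have hφx : φ x ≤ ((⟪x, u⟫_ℝ - δ : ℝ) : EReal) :=
    (hp.le_conjFn_conjFn hlsc hcvx x).trans <| iSup_le fun v => by
      refine (EReal.sub_le_sub le_rfl (coe_inner_add_le_of_mem_subdiff hx hδ v)).trans_eq ?_
      rw [← EReal.coe_sub, inner_sub_left, real_inner_comm u x]; ring_nf
  refine fun y => (add_le_add le_rfl hφx).trans ?_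
  rw [← EReal.coe_add]
  refine coe_le_of_forall_eq_coe (hp.1 y) fun t ht => ?_
  have := le_conjFn φ y u
  rw [ht, hδ, ← EReal.coe_sub, EReal.coe_le_coe_iff] at this
  rw [inner_sub_left]; linarith

end ConvexAnalysis

section MonotoneOperators

variable {E : Type*} [NormedAddCommGroup E] [InnerProductSpace ℝ E]

def MonotoneOp (A : E → Set E) : Prop :=
  ∀ ⦃x u y v⦄, u ∈ A x → v ∈ A y → 0 ≤ ⟪x - y, u - v⟫_ℝ

def zerosAdd (A : E → Set E) (B : E → E) : Set E :=
  {x | ∃ w ∈ A x, w + B x = 0}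

lemma ProperFn.monotoneOp_subdiff {φ : E → EReal} (hp : ProperFn φ) :
    MonotoneOp (subdiff φ) := by
  intro x u y v hu hv
  obtain ⟨a, ha⟩ := hp.exists_eq_coe_of_mem_subdiff hu
  obtain ⟨b, hb⟩ := hp.exists_eq_coe_of_mem_subdiff hv
  have h₁ := coe_inner_add_le_of_mem_subdiff hu ha y
  have h₂ := coe_inner_add_le_of_mem_subdiff hv hb x
  rw [hb, EReal.coe_le_coe_iff] at h₁
  rw [ha, EReal.coe_le_coe_iff] at h₂
  have : ⟪x - y, u⟫_ℝ = -⟪y - x, u⟫_ℝ := by rw [← inner_neg_left, neg_sub]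
  rw [inner_sub_right]; linarith

lemma IsResolvent.inv_smul_sub_mem {A : E → Set E} {γ : ℝ} {J : E → E}
    (hJ : IsResolvent γ A J) (hγ : 0 < γ) (w : E) : γ⁻¹ • (w - J w) ∈ A (J w) := by
  obtain ⟨u, hu, hw⟩ := hJ w
  rwa [sub_eq_iff_eq_add'.2 hw, inv_smul_smul₀ hγ.ne']

lemma IsResolvent.norm_sub_le {A : E → Set E} (hA : MonotoneOp A) {γ : ℝ} (hγ : 0 ≤ γ)
    {J : E → E} (hJ : IsResolvent γ A J) (w w' : E) : ‖J w - J w'‖ ≤ ‖w - w'‖ := by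
  obtain ⟨u, hu, hw⟩ := hJ w
  obtain ⟨u', hu', hw'⟩ := hJ w'
  have hfirm : ‖J w - J w'‖ ^ 2 ≤ ⟪J w - J w', w - w'⟫_ℝ := by
    have : w - w' = (J w - J w') + γ • (u - u') := by
      linear_combination (norm := module) hw - hw'
    rw [this, inner_add_right, real_inner_smul_right, real_inner_self_eq_norm_sq]
    nlinarith [hA hu hu']
  nlinarith [real_inner_le_norm (J w - J w') (w - w'), norm_nonneg (J w - J w'),
    norm_nonneg (w - w')]

/-- Minty-type characterisation of the zeros of `A + B`, with `B` Lipschitz: the resolvent turns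
`S ↦ J (p - γ B S)` into a contraction whose fixed point must be `p`. -/
lemma IsResolvent.mem_zerosAdd_of_forall_inner_nonneg [CompleteSpace E] {A : E → Set E}
    (hA : MonotoneOp A) {γ : ℝ} (hγ : 0 < γ) {J : E → E} (hJ : IsResolvent γ A J)
    (B : E →L[ℝ] E) {β : ℝ} (hβ : 0 ≤ β) (hB : ∀ q, ‖B q‖ ≤ β * ‖q‖) (hγβ : γ * β < 1)
    {p : E} (hp : ∀ s w, w ∈ A s → 0 ≤ ⟪p - s, -(w + B s)⟫_ℝ) : p ∈ zerosAdd A B := by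
  have hcontr : ContractingWith ⟨γ * β, by positivity⟩ fun S => J (p - γ • B S) := by
    refine ⟨by exact_mod_cast hγβ, LipschitzWith.of_dist_le_mul fun S S' => ?_⟩
    rw [dist_eq_norm, dist_eq_norm]
    calc ‖J (p - γ • B S) - J (p - γ • B S')‖ ≤ ‖γ • B (S' - S)‖ :=
          (hJ.norm_sub_le hA hγ.le _ _).trans_eq (by rw [map_sub, smul_sub]; congr 1; abel)
      _ ≤ γ * β * ‖S - S'‖ := by
          rw [norm_smul, Real.norm_of_nonneg hγ.le, norm_sub_rev S S', mul_assoc]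
          exact mul_le_mul_of_nonneg_left (hB _) hγ.le
  obtain ⟨S, hS, -⟩ := hcontr.exists_fixedPoint p (edist_ne_top _ _)
  obtain ⟨u, hu, hpS⟩ := hJ (p - γ • B S)
  rw [hS.eq] at hu hpS
  have hdiff : p - S = γ • (u + B S) := by linear_combination (norm := module) hpS
  have hzero : u + B S = 0 := by
    have := hp S u hu
    rw [hdiff, real_inner_smul_left, inner_neg_right, real_inner_self_eq_norm_sq] at this
    exact norm_eq_zero.1 <| (pow_eq_zero_iff two_ne_zero).1 <| by
      nlinarith [sq_nonneg ‖u + B S‖]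
  rw [hzero, smul_zero, sub_eq_zero] at hdiff
  exact hdiff ▸ ⟨u, hu, hzero⟩

end MonotoneOperators

section TsengStep

variable {K : Type*} [NormedAddCommGroup K] [InnerProductSpace ℝ K]
  {A : K → Set K} {B : K →L[ℝ] K} {β γ : ℝ} {J : K → K}

def fbPoint (J : K → K) (B : K →L[ℝ] K) (γ : ℝ) (x : K) : K :=
  J (x - γ • B x)

def tsengStep (J : K → K) (B : K →L[ℝ] K) (γ : ℝ) (x : K) : K :=
  fbPoint J B γ x + γ • (B x - B (fbPoint J B γ x))

lemma norm_tsengStep_sub_sq_le (hA : MonotoneOp A) (hskew : ∀ q, ⟪q, B q⟫_ℝ = 0)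
    (hB : ∀ q, ‖B q‖ ≤ β * ‖q‖) (hγ : 0 ≤ γ) (hJ : IsResolvent γ A J) {z : K}
    (hz : z ∈ zerosAdd A B) (x : K) :
    ‖tsengStep J B γ x - z‖ ^ 2 ≤
      ‖x - z‖ ^ 2 - (1 - (γ * β) ^ 2) * ‖x - fbPoint J B γ x‖ ^ 2 := by
  obtain ⟨u, hu, hxu⟩ := hJ (x - γ • B x)
  obtain ⟨w, hw, hwz⟩ := hz
  simp only [tsengStep, fbPoint]
  set p := J (x - γ • B x)
  have hxp : x - p = γ • (B x + u) := by linear_combination (norm := module) hxu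
  -- monotonicity of `A` at `(p, u)`, `(z, w)` and skewness of `B` control the cross term
  have hcross : γ * ⟪p - z, B x - B p⟫_ℝ ≤ ⟪p - z, x - p⟫_ℝ := by
    have hsplit : ⟪p - z, x - p⟫_ℝ - γ * ⟪p - z, B x - B p⟫_ℝ =
        γ * ⟪p - z, u - w⟫_ℝ + γ * ⟪p - z, B (p - z)⟫_ℝ := by
      rw [hxp, eq_neg_of_add_eq_zero_left hwz, map_sub]
      simp only [inner_smul_right, inner_add_right, inner_sub_right, inner_neg_right]
      ring
    nlinarith [hskew (p - z), mul_nonneg hγ (hA hu hw)]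
  have hBxp : ‖B x - B p‖ ^ 2 ≤ β ^ 2 * ‖x - p‖ ^ 2 := by
    rw [← map_sub, ← mul_pow]
    exact pow_le_pow_left₀ (norm_nonneg _) (hB _) 2
  have h₁ : ‖p + γ • (B x - B p) - z‖ ^ 2 =
      ‖p - z‖ ^ 2 + 2 * (γ * ⟪p - z, B x - B p⟫_ℝ) + γ ^ 2 * ‖B x - B p‖ ^ 2 := by
    rw [show p + γ • (B x - B p) - z = (p - z) + γ • (B x - B p) by abel, norm_add_sq_real,
      real_inner_smul_right, norm_smul, mul_pow, Real.norm_eq_abs, sq_abs]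
  have h₂ : ‖x - z‖ ^ 2 = ‖p - z‖ ^ 2 + 2 * ⟪p - z, x - p⟫_ℝ + ‖x - p‖ ^ 2 := by
    rw [show x - z = (p - z) + (x - p) by abel, norm_add_sq_real]
  rw [h₁, h₂]
  nlinarith [mul_le_mul_of_nonneg_left hBxp (sq_nonneg γ)]

lemma IsResolvent.residual_mem (hγ : 0 < γ) (hJ : IsResolvent γ A J) (x : K) :
    γ⁻¹ • (x - fbPoint J B γ x) - B (x - fbPoint J B γ x) - B (fbPoint J B γ x) ∈
      A (fbPoint J B γ x) := by
  have hres : γ⁻¹ • (x - γ • B x - J (x - γ • B x)) =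
      γ⁻¹ • (x - fbPoint J B γ x) - B (x - fbPoint J B γ x) - B (fbPoint J B γ x) := by
    simp only [fbPoint, map_sub, smul_sub, smul_smul, inv_mul_cancel₀ hγ.ne', one_smul]
    abel
  exact hres ▸ hJ.inv_smul_sub_mem hγ (x - γ • B x)

lemma norm_inv_smul_sub_le (hB : ∀ q, ‖B q‖ ≤ β * ‖q‖) {ε : ℝ} (hε : 0 < ε)
    (hεγ : ε ≤ γ) (v : K) : ‖γ⁻¹ • v - B v‖ ≤ (ε⁻¹ + β) * ‖v‖ := by
  refine (norm_sub_le _ _).trans ?_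
  rw [norm_smul, Real.norm_of_nonneg (inv_nonneg.2 (hε.trans_le hεγ).le), add_mul]
  gcongr
  exact hB v

lemma norm_sub_fbPoint_le (hA : MonotoneOp A) (hγ : 0 ≤ γ) (hJ : IsResolvent γ A J)
    (x ea eb : K) :
    ‖J (x - γ • (B x + ea)) + eb - fbPoint J B γ x‖ ≤ γ * ‖ea‖ + ‖eb‖ := by
  calc ‖J (x - γ • (B x + ea)) + eb - fbPoint J B γ x‖
      ≤ ‖J (x - γ • (B x + ea)) - J (x - γ • B x)‖ + ‖eb‖ := by
        rw [fbPoint, add_sub_right_comm]; exact norm_add_le _ _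
    _ ≤ ‖(x - γ • (B x + ea)) - (x - γ • B x)‖ + ‖eb‖ := by
        gcongr; exact hJ.norm_sub_le hA hγ _ _
    _ = γ * ‖ea‖ + ‖eb‖ := by
        rw [smul_add, sub_add_eq_sub_sub, sub_sub_cancel_left, norm_neg,
          norm_smul, Real.norm_of_nonneg hγ]

lemma norm_sub_tsengStep_le (hA : MonotoneOp A) (hB : ∀ q, ‖B q‖ ≤ β * ‖q‖)
    (hγ : 0 ≤ γ) (hγβ : γ * β ≤ 1) (hJ : IsResolvent γ A J) {x p ea eb ec : K}
    (hp : p = J (x - γ • (B x + ea)) + eb) :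
    ‖x - (x - γ • (B x + ea)) + (p - γ • (B p + ec)) - tsengStep J B γ x‖ ≤
      γ * ‖ea‖ + 2 * (γ * ‖ea‖ + ‖eb‖) + γ * ‖ec‖ := by
  set q := fbPoint J B γ x
  have hpq : ‖p - q‖ ≤ γ * ‖ea‖ + ‖eb‖ := hp ▸ norm_sub_fbPoint_le hA hγ hJ x ea eb
  have hBpq : ‖γ • (B p - B q)‖ ≤ ‖p - q‖ := by
    rw [norm_smul, Real.norm_of_nonneg hγ, ← map_sub]
    nlinarith [mul_le_mul_of_nonneg_left (hB (p - q)) hγ, norm_nonneg (p - q)]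
  have hsplit : x - (x - γ • (B x + ea)) + (p - γ • (B p + ec)) - tsengStep J B γ x =
      γ • ea + (p - q) - γ • (B p - B q) - γ • ec := by
    simp only [tsengStep, q]; module
  have hsmul : ∀ e : K, ‖γ • e‖ = γ * ‖e‖ := fun e => by
    rw [norm_smul, Real.norm_of_nonneg hγ]
  rw [hsplit]
  refine (norm_sub_le _ _).trans ?_
  linarith [norm_add_le (γ • ea) (p - q), norm_sub_le (γ • ea + (p - q)) (γ • (B p - B q)),
    hsmul ea, hsmul ec]

end TsengStep

lemma exists_tendsto_of_le_add_of_summable {a e : ℕ → ℝ} (ha : ∀ n, 0 ≤ a n)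
    (he : ∀ n, 0 ≤ e n) (hrec : ∀ n, a (n + 1) ≤ a n + e n) (hes : Summable e) :
    ∃ l, Tendsto a atTop (𝓝 l) := by
  -- `a n - ∑_{k<n} e k` is antitone and bounded below
  set b : ℕ → ℝ := fun n => a n - ∑ k ∈ Finset.range n, e k
  have hanti : Antitone b := antitone_nat_of_succ_le fun n => by
    simp only [b, Finset.sum_range_succ]; linarith [hrec n]
  have hbdd : BddBelow (Set.range b) := ⟨-∑' k, e k, by
    rintro _ ⟨n, rfl⟩
    linarith [ha n, hes.sum_le_tsum (Finset.range n) fun k _ => he k]⟩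
  refine ⟨(⨅ n, b n) + ∑' k, e k, ?_⟩
  convert (tendsto_atTop_ciInf hanti hbdd).add hes.hasSum.tendsto_sum_nat using 1
  ext n; simp [b]

lemma summable_of_le_sub_add {f g c : ℕ → ℝ} (hf : ∀ n, 0 ≤ f n) (hg : ∀ n, 0 ≤ g n)
    (hc : ∀ n, 0 ≤ c n) (hcs : Summable c) (h : ∀ n, f n ≤ g n - g (n + 1) + c n) :
    Summable f := by
  refine summable_of_sum_range_le hf (c := g 0 + ∑' k, c k) fun n => ?_
  have htel : ∑ k ∈ Finset.range n, f k ≤ g 0 - g n + ∑ k ∈ Finset.range n, c k := by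
    induction n with
    | zero => simp
    | succ n ih => rw [Finset.sum_range_succ, Finset.sum_range_succ]; linarith [h n]
  linarith [hg n, hcs.sum_le_tsum (Finset.range n) fun k _ => hc k]

lemma tendsto_and_summable_sq_of_quasiFejer {a b t e : ℕ → ℝ} {δ : ℝ} (hδ : 0 < δ)
    (ha : ∀ n, 0 ≤ a n) (hb : ∀ n, 0 ≤ b n) (he : ∀ n, 0 ≤ e n) (hes : Summable e)
    (hsq : ∀ n, b n ^ 2 ≤ a n ^ 2 - δ * t n ^ 2) (hrec : ∀ n, a (n + 1) ≤ b n + e n) :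
    (∃ l, Tendsto a atTop (𝓝 l)) ∧ Summable fun n => t n ^ 2 := by
  have hba : ∀ n, b n ≤ a n := fun n =>
    (pow_le_pow_iff_left₀ (hb n) (ha n) two_ne_zero).1 (by nlinarith [hsq n, sq_nonneg (t n)])
  obtain ⟨l, hl⟩ := exists_tendsto_of_le_add_of_summable ha he
    (fun n => (hrec n).trans (by linarith [hba n])) hes
  obtain ⟨M, hM⟩ := hl.bddAbove_range
  obtain ⟨C, hC⟩ := hes.tendsto_atTop_zero.bddAbove_range
  have hM' : ∀ n, a n ≤ M := fun n => hM ⟨n, rfl⟩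
  have hC' : ∀ n, e n ≤ C := fun n => hC ⟨n, rfl⟩
  refine ⟨⟨l, hl⟩, (summable_mul_left_iff hδ.ne').1 ?_⟩
  refine summable_of_le_sub_add (g := fun n => a n ^ 2) (c := fun n => e n * (2 * M + e n))
    (fun n => by positivity) (fun n => sq_nonneg _) (fun n => ?_) ?_ (fun n => ?_)
  · nlinarith [ha 0, hM' 0, he n]
  · refine (hes.mul_left (2 * M + C)).of_nonneg_of_le (fun n => ?_) fun n => ?_
    · nlinarith [ha 0, hM' 0, he n]
    · nlinarith [he n, hC' n]
  · have h₁ : a (n + 1) ^ 2 ≤ (b n + e n) ^ 2 :=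
      pow_le_pow_left₀ (ha _) (hrec n) 2
    nlinarith [hsq n, hba n, hM' n, he n, hb n]

section WeakLimits

variable {E : Type*} [NormedAddCommGroup E] [InnerProductSpace ℝ E]

/-- Banach–Alaoglu, transported to `E` by the Riesz representation. -/
lemma exists_weak_limit_of_norm_le [CompleteSpace E] {ι : Type*} {X : ι → E} {R : ℝ}
    (hR : ∀ i, ‖X i‖ ≤ R) (V : Ultrafilter ι) :
    ∃ p : E, ∀ y, Tendsto (fun i => ⟪X i, y⟫_ℝ) V (𝓝 ⟪p, y⟫_ℝ) := by
  set T : ι → WeakDual ℝ E := fun i =>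
    StrongDual.toWeakDual (InnerProductSpace.toDual ℝ E (X i))
  obtain ⟨ℓ, -, hℓ⟩ := (WeakDual.isCompact_closedBall (0 : StrongDual ℝ E) R).ultrafilter_le_nhds
    (V.map T) (by
      rw [Filter.le_principal_iff, Ultrafilter.coe_map, Filter.mem_map]
      exact Filter.univ_mem' fun i => by simpa [T] using hR i)
  refine ⟨(InnerProductSpace.toDual ℝ E).symm (WeakDual.toStrongDual ℓ), fun y => ?_⟩
  rw [InnerProductSpace.toDual_symm_apply]
  exact tendsto_iff_forall_eval_tendsto_topDualPairing.1 hℓ y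

lemma tendsto_inner_of_tendsto_sub {ι : Type*} {l : Filter ι} {X Y : ι → E} {p : E}
    (hX : ∀ y, Tendsto (fun i => ⟪X i, y⟫_ℝ) l (𝓝 ⟪p, y⟫_ℝ))
    (hXY : Tendsto (fun i => X i - Y i) l (𝓝 0)) (y : E) :
    Tendsto (fun i => ⟪Y i, y⟫_ℝ) l (𝓝 ⟪p, y⟫_ℝ) := by
  simpa [inner_sub_left] using (hX y).sub (hXY.inner (tendsto_const_nhds (x := y)))

/-- Opial's argument: `⟪X n, p - q⟫` is a combination of the two convergent distances, hence
converges, and its limits along `V` and `W` are `⟪p, p - q⟫` and `⟪q, p - q⟫`. -/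
lemma eq_of_tendsto_norm_sub {X : ℕ → E} {p q : E}
    (hp : ∃ l, Tendsto (fun n => ‖X n - p‖) atTop (𝓝 l))
    (hq : ∃ l, Tendsto (fun n => ‖X n - q‖) atTop (𝓝 l)) {V W : Filter ℕ} [V.NeBot]
    [W.NeBot] (hV : V ≤ atTop) (hW : W ≤ atTop)
    (hpV : ∀ y, Tendsto (fun n => ⟪X n, y⟫_ℝ) V (𝓝 ⟪p, y⟫_ℝ))
    (hqW : ∀ y, Tendsto (fun n => ⟪X n, y⟫_ℝ) W (𝓝 ⟪q, y⟫_ℝ)) : p = q := by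
  obtain ⟨lp, hlp⟩ := hp
  obtain ⟨lq, hlq⟩ := hq
  have hid : ∀ n,
      ⟪X n, p - q⟫_ℝ = (‖X n - q‖ ^ 2 - ‖X n - p‖ ^ 2 + ‖p‖ ^ 2 - ‖q‖ ^ 2) / 2 := fun n => by
    rw [norm_sub_sq_real, norm_sub_sq_real, inner_sub_right]; ring
  have hlim : Tendsto (fun n => ⟪X n, p - q⟫_ℝ) atTop
      (𝓝 ((lq ^ 2 - lp ^ 2 + ‖p‖ ^ 2 - ‖q‖ ^ 2) / 2)) := by
    simp only [hid]
    exact (((hlq.pow 2).sub (hlp.pow 2)).add_const _ |>.sub_const _).div_const 2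
  have h₁ := tendsto_nhds_unique (hpV (p - q)) (hlim.mono_left hV)
  have h₂ := tendsto_nhds_unique (hqW (p - q)) (hlim.mono_left hW)
  rw [← sub_eq_zero, ← inner_self_eq_zero (𝕜 := ℝ), inner_sub_left, h₁, h₂, sub_self]

lemma exists_weakTendsto_of_opial [CompleteSpace E] {X : ℕ → E} {S : Set E} (hS : S.Nonempty)
    (hdist : ∀ z ∈ S, ∃ l, Tendsto (fun n => ‖X n - z‖) atTop (𝓝 l))
    (hcluster : ∀ V : Ultrafilter ℕ, (V : Filter ℕ) ≤ atTop → ∀ p : E,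
      (∀ y, Tendsto (fun n => ⟪X n, y⟫_ℝ) V (𝓝 ⟪p, y⟫_ℝ)) → p ∈ S) :
    ∃ p ∈ S, WeakTendsto X p := by
  obtain ⟨z, hz⟩ := hS
  obtain ⟨M, hM⟩ := (hdist z hz).choose_spec.bddAbove_range
  have hR : ∀ n, ‖X n‖ ≤ M + ‖z‖ := fun n => by
    linarith [norm_sub_norm_le (X n) z, hM ⟨n, rfl⟩]
  obtain ⟨p₀, hp₀⟩ := exists_weak_limit_of_norm_le hR (Ultrafilter.of atTop)
  have hp₀S := hcluster _ (Ultrafilter.of_le _) p₀ hp₀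
  refine ⟨p₀, hp₀S, fun y => (tendsto_iff_ultrafilter _ _ _).2 fun V hV => ?_⟩
  obtain ⟨p, hp⟩ := exists_weak_limit_of_norm_le hR V
  have hV₀ : (Ultrafilter.of (atTop : Filter ℕ) : Filter ℕ) ≤ atTop := Ultrafilter.of_le _
  rw [eq_of_tendsto_norm_sub (hdist p₀ hp₀S) (hdist p (hcluster V hV p hp)) hV₀ hV hp₀ hp]
  exact hp y

/-- The graph of `A + B` is closed for the weak topology on the first and the norm topology on
the second factor, in the form of a variational inequality. -/
lemma forall_inner_nonneg_of_tendsto {A : E → Set E} (hA : MonotoneOp A) {B : E →L[ℝ] E}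
    (hskew : ∀ q, ⟪q, B q⟫_ℝ = 0) {ι : Type*} {l : Filter ι} [l.NeBot] {Y T : ι → E}
    {R : ℝ} (hY : ∀ i, ‖Y i‖ ≤ R) (hYT : ∀ i, T i - B (Y i) ∈ A (Y i))
    (hT : Tendsto T l (𝓝 0)) {p : E} (hp : ∀ y, Tendsto (fun i => ⟪Y i, y⟫_ℝ) l (𝓝 ⟪p, y⟫_ℝ))
    (s w : E) (hw : w ∈ A s) :
    0 ≤ ⟪p - s, -(w + B s)⟫_ℝ := by
  have hmono : ∀ i, 0 ≤ ⟪Y i - s, T i⟫_ℝ - ⟪Y i, w + B s⟫_ℝ + ⟪s, w + B s⟫_ℝ := by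
    intro i
    have h₁ := hA (hYT i) hw
    have h₂ := hskew (Y i - s)
    simp only [map_sub, inner_sub_left, inner_sub_right, inner_add_right] at h₁ h₂ ⊢
    linarith
  have hTY : Tendsto (fun i => ⟪Y i - s, T i⟫_ℝ) l (𝓝 0) := by
    refine squeeze_zero_norm (fun i => (abs_real_inner_le_norm _ _).trans
      (mul_le_mul_of_nonneg_right ((norm_sub_le _ _).trans (add_le_add_left (hY i) _))
        (norm_nonneg _))) ?_
    simpa using (tendsto_norm_zero.comp hT).const_mul (R + ‖s‖)
  have := ge_of_tendsto ((hTY.sub (hp _)).add_const ⟪s, w + B s⟫_ℝ)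
    (Eventually.of_forall hmono)
  rw [inner_neg_right, inner_sub_left]
  linarith

end WeakLimits

section Tseng

variable {K : Type*} [NormedAddCommGroup K] [InnerProductSpace ℝ K]
  {A : K → Set K} {B : K →L[ℝ] K} {β ε : ℝ} {γ : ℕ → ℝ} {J : ℕ → K → K}
  {EA EB EC X P : ℕ → K}

lemma tseng_quasiFejer (hA : MonotoneOp A) (hskew : ∀ q, ⟪q, B q⟫_ℝ = 0) (hβ : 0 < β)
    (hB : ∀ q, ‖B q‖ ≤ β * ‖q‖) (hε : 0 < ε)
    (hγ : ∀ n, γ n ∈ Set.Icc ε ((1 - ε) / β)) (hJ : ∀ n, IsResolvent (γ n) A (J n))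
    (hEA : Summable fun n => ‖EA n‖) (hEB : Summable fun n => ‖EB n‖)
    (hEC : Summable fun n => ‖EC n‖)
    (hP : ∀ n, P n = J n (X n - γ n • (B (X n) + EA n)) + EB n)
    (hX : ∀ n, X (n + 1) =
      X n - (X n - γ n • (B (X n) + EA n)) + (P n - γ n • (B (P n) + EC n)))
    {z : K} (hz : z ∈ zerosAdd A B) :
    (∃ l, Tendsto (fun n => ‖X n - z‖) atTop (𝓝 l)) ∧
      Summable fun n => ‖X n - fbPoint (J n) B (γ n) (X n)‖ ^ 2 := by
  set Γ := (1 - ε) / β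
  have hγ₀ : ∀ n, 0 ≤ γ n := fun n => hε.le.trans (hγ n).1
  have hγβ : ∀ n, γ n * β ≤ 1 - ε := fun n => (le_div_iff₀ hβ).1 (hγ n).2
  have hε₁ : 0 ≤ 1 - ε := by nlinarith [hγβ 0, (hγ 0).1]
  have hΓ : 0 ≤ Γ := div_nonneg hε₁ hβ.le
  refine tendsto_and_summable_sq_of_quasiFejer (δ := 1 - (1 - ε) ^ 2)
    (b := fun n => ‖tsengStep (J n) B (γ n) (X n) - z‖)
    (e := fun n => Γ * (3 * ‖EA n‖ + ‖EC n‖) + 2 * ‖EB n‖) (by nlinarith)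
    (fun n => norm_nonneg _) (fun n => norm_nonneg _)
    (fun n => add_nonneg (mul_nonneg hΓ (by positivity)) (by positivity))
    ((((hEA.mul_left 3).add hEC).mul_left Γ).add (hEB.mul_left 2)) (fun n => ?_) (fun n => ?_)
  · have hstep := norm_tsengStep_sub_sq_le hA hskew hB (hγ₀ n) (hJ n) hz (X n)
    have : (γ n * β) ^ 2 ≤ (1 - ε) ^ 2 :=
      pow_le_pow_left₀ (mul_nonneg (hγ₀ n) hβ.le) (hγβ n) 2
    nlinarith [sq_nonneg ‖X n - fbPoint (J n) B (γ n) (X n)‖]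
  · have herr := norm_sub_tsengStep_le hA hB (hγ₀ n) ((hγβ n).trans (by linarith)) (hJ n)
      (ec := EC n) (hP n)
    rw [← hX n] at herr
    nlinarith [norm_sub_le_norm_sub_add_norm_sub (X (n + 1)) (tsengStep (J n) B (γ n) (X n)) z,
      mul_le_mul_of_nonneg_right (hγ n).2 (norm_nonneg (EA n)),
      mul_le_mul_of_nonneg_right (hγ n).2 (norm_nonneg (EC n))]

theorem exists_mem_zerosAdd_weakTendsto_tseng [CompleteSpace K] (hA : MonotoneOp A)
    (hskew : ∀ q, ⟪q, B q⟫_ℝ = 0) (hβ : 0 < β) (hB : ∀ q, ‖B q‖ ≤ β * ‖q‖) (hε : 0 < ε)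
    (hγ : ∀ n, γ n ∈ Set.Icc ε ((1 - ε) / β)) (hJ : ∀ n, IsResolvent (γ n) A (J n))
    (hzero : (zerosAdd A B).Nonempty) (hEA : Summable fun n => ‖EA n‖)
    (hEB : Summable fun n => ‖EB n‖) (hEC : Summable fun n => ‖EC n‖)
    (hP : ∀ n, P n = J n (X n - γ n • (B (X n) + EA n)) + EB n)
    (hX : ∀ n, X (n + 1) =
      X n - (X n - γ n • (B (X n) + EA n)) + (P n - γ n • (B (P n) + EC n))) :
    ∃ x ∈ zerosAdd A B, WeakTendsto X x ∧ Tendsto (fun n => X n - P n) atTop (𝓝 0) := by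
  have hfejer := fun z (hz : z ∈ zerosAdd A B) =>
    tseng_quasiFejer hA hskew hβ hB hε hγ hJ hEA hEB hEC hP hX hz
  have hγ₀ : ∀ n, 0 < γ n := fun n => hε.trans_le (hγ n).1
  set Y := fun n => fbPoint (J n) B (γ n) (X n)
  obtain ⟨z, hz⟩ := hzero
  have hXY : Tendsto (fun n => ‖X n - Y n‖) atTop (𝓝 0) := by
    simpa [Real.sqrt_sq (norm_nonneg _)] using (hfejer z hz).2.tendsto_atTop_zero.sqrt
  have hXP : Tendsto (fun n => X n - P n) atTop (𝓝 0) := by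
    have hbound : ∀ n, ‖X n - P n‖ ≤ ‖X n - Y n‖ + ((1 - ε) / β * ‖EA n‖ + ‖EB n‖) := by
      intro n
      have hPY := hP n ▸ norm_sub_fbPoint_le hA (hγ₀ n).le (hJ n) (X n) (EA n) (EB n)
      nlinarith [norm_sub_le_norm_sub_add_norm_sub (X n) (Y n) (P n), norm_sub_rev (Y n) (P n),
        mul_le_mul_of_nonneg_right (hγ n).2 (norm_nonneg (EA n))]
    refine squeeze_zero_norm hbound ?_
    simpa using hXY.add ((hEA.tendsto_atTop_zero.const_mul _).add hEB.tendsto_atTop_zero)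
  obtain ⟨R, hR⟩ : ∃ R, ∀ n, ‖Y n‖ ≤ R := by
    obtain ⟨M₁, hM₁⟩ := (hfejer z hz).1.choose_spec.bddAbove_range
    obtain ⟨M₂, hM₂⟩ := hXY.bddAbove_range
    refine ⟨M₂ + M₁ + ‖z‖, fun n => ?_⟩
    linarith [hM₁ ⟨n, rfl⟩, hM₂ ⟨n, rfl⟩, norm_sub_norm_le (Y n) (X n),
      norm_sub_rev (Y n) (X n), norm_sub_norm_le (X n) z]
  set T := fun n => (γ n)⁻¹ • (X n - Y n) - B (X n - Y n)
  have hT : Tendsto T atTop (𝓝 0) :=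
    squeeze_zero_norm (fun n => norm_inv_smul_sub_le hB hε (hγ n).1 _)
      (by simpa using hXY.const_mul (ε⁻¹ + β))
  have hγβ : γ 0 * β < 1 := ((le_div_iff₀ hβ).1 (hγ 0).2).trans_lt (by linarith)
  obtain ⟨x, hx, hweak⟩ := exists_weakTendsto_of_opial ⟨z, hz⟩ (fun z hz => (hfejer z hz).1)
    fun V hV p hp => (hJ 0).mem_zerosAdd_of_forall_inner_nonneg hA (hγ₀ 0) B hβ.le hB hγβ <|
      forall_inner_nonneg_of_tendsto hA hskew hR (fun n => (hJ n).residual_mem (hγ₀ n) (X n))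
        (hT.mono_left hV) <|
        tendsto_inner_of_tendsto_sub hp ((tendsto_zero_iff_norm_tendsto_zero.2 hXY).mono_left hV)
  exact ⟨x, hx, hweak, hXP⟩

end Tseng

lemma WithLp.prod_ext {α β : Type*} {x y : WithLp 2 (α × β)} (h₁ : x.fst = y.fst)
    (h₂ : x.snd = y.snd) : x = y :=
  (WithLp.ext_iff _).2 (Prod.ext h₁ h₂)

lemma WithLp.norm_toLp_le {α β : Type*} [SeminormedAddCommGroup α] [SeminormedAddCommGroup β]
    (x : α) (v : β) : ‖WithLp.toLp 2 (x, v)‖ ≤ ‖x‖ + ‖v‖ := by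
  rw [← pow_le_pow_iff_left₀ (norm_nonneg _) (by positivity) two_ne_zero,
    WithLp.prod_norm_sq_eq_of_L2]
  simp only [WithLp.toLp_fst, WithLp.toLp_snd]
  nlinarith [mul_nonneg (norm_nonneg x) (norm_nonneg v)]

lemma summable_norm_toLp {α β : Type*} [SeminormedAddCommGroup α] [SeminormedAddCommGroup β]
    {a : ℕ → α} {b : ℕ → β} (ha : Summable fun n => ‖a n‖)
    (hb : Summable fun n => ‖b n‖) :
    Summable fun n => ‖WithLp.toLp 2 (a n, b n)‖ :=
  (ha.add hb).of_nonneg_of_le (fun _ => norm_nonneg _) fun _ => WithLp.norm_toLp_le _ _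

section PrimalDual

variable {H G : Type*} [NormedAddCommGroup H] [InnerProductSpace ℝ H]
  [NormedAddCommGroup G] [InnerProductSpace ℝ G]

lemma WeakTendsto.fst {X : ℕ → WithLp 2 (H × G)} {p : WithLp 2 (H × G)}
    (h : WeakTendsto X p) : WeakTendsto (fun n => (X n).fst) p.fst := fun w => by
  simpa using h (WithLp.toLp 2 (w, 0))

lemma WeakTendsto.snd {X : ℕ → WithLp 2 (H × G)} {p : WithLp 2 (H × G)}
    (h : WeakTendsto X p) : WeakTendsto (fun n => (X n).snd) p.snd := fun w => by
  simpa using h (WithLp.toLp 2 (0, w))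

/-- `(x, v) ↦ (∂f x - z) × (∂g* v + r)`, the monotone part of the primal-dual inclusion. -/
def primalDualOp (f : H → EReal) (g : G → EReal) (z : H) (r : G) :
    WithLp 2 (H × G) → Set (WithLp 2 (H × G)) :=
  fun q => {w | w.fst + z ∈ subdiff f q.fst ∧ w.snd - r ∈ subdiff (conjFn g) q.snd}

variable {f : H → EReal} {g : G → EReal} {z : H} {r : G}

lemma monotoneOp_primalDualOp (hf : ProperFn f) (hg : ProperFn (conjFn g)) :
    MonotoneOp (primalDualOp f g z r) := by
  intro q w q' w' hw hw'
  have h₁ := hf.monotoneOp_subdiff hw.1 hw'.1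
  have h₂ := hg.monotoneOp_subdiff hw.2 hw'.2
  rw [add_sub_add_right_eq_sub] at h₁
  rw [sub_sub_sub_cancel_right] at h₂
  simpa using add_nonneg h₁ h₂

lemma isResolvent_primalDualOp {γ : ℝ} {Jf : H → H} {Jg : G → G}
    (hf : IsResolvent γ (subdiff f) Jf) (hg : IsResolvent γ (subdiff (conjFn g)) Jg) :
    IsResolvent γ (primalDualOp f g z r)
      fun q => WithLp.toLp 2 (Jf (q.fst + γ • z), Jg (q.snd - γ • r)) := by
  intro q
  obtain ⟨u, hu, hfq⟩ := hf (q.fst + γ • z)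
  obtain ⟨w, hw, hgq⟩ := hg (q.snd - γ • r)
  refine ⟨WithLp.toLp 2 (u - z, w + r), ⟨by simpa using hu, by simpa using hw⟩,
    WithLp.prod_ext ?_ ?_⟩
  · simp only [WithLp.add_fst, WithLp.smul_fst, WithLp.toLp_fst]
    linear_combination (norm := module) hfq
  · simp only [WithLp.add_snd, WithLp.smul_snd, WithLp.toLp_snd]
    linear_combination (norm := module) hgq

variable [CompleteSpace H] [CompleteSpace G]

noncomputable def skewOp (L : H →L[ℝ] G) : WithLp 2 (H × G) →L[ℝ] WithLp 2 (H × G) :=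
  (WithLp.prodContinuousLinearEquiv 2 ℝ H G).symm.toContinuousLinearMap ∘L
    ((ContinuousLinearMap.adjoint L ∘L ContinuousLinearMap.snd ℝ H G).prod
      (-L ∘L ContinuousLinearMap.fst ℝ H G)) ∘L
    (WithLp.prodContinuousLinearEquiv 2 ℝ H G).toContinuousLinearMap

@[simp] lemma skewOp_fst (L : H →L[ℝ] G) (q : WithLp 2 (H × G)) :
    (skewOp L q).fst = ContinuousLinearMap.adjoint L q.snd := rfl

@[simp] lemma skewOp_snd (L : H →L[ℝ] G) (q : WithLp 2 (H × G)) :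
    (skewOp L q).snd = -L q.fst := rfl

lemma inner_skewOp_self (L : H →L[ℝ] G) (q : WithLp 2 (H × G)) :
    ⟪q, skewOp L q⟫_ℝ = 0 := by
  simp [ContinuousLinearMap.adjoint_inner_right, real_inner_comm]

lemma norm_skewOp_le (L : H →L[ℝ] G) (q : WithLp 2 (H × G)) :
    ‖skewOp L q‖ ≤ ‖L‖ * ‖q‖ := by
  rw [← pow_le_pow_iff_left₀ (norm_nonneg _) (by positivity) two_ne_zero, mul_pow,
    WithLp.prod_norm_sq_eq_of_L2, WithLp.prod_norm_sq_eq_of_L2, skewOp_fst, skewOp_snd, norm_neg]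
  have h₁ : ‖ContinuousLinearMap.adjoint L q.snd‖ ≤ ‖L‖ * ‖q.snd‖ := by
    simpa using (ContinuousLinearMap.adjoint L).le_opNorm q.snd
  have h₂ := L.le_opNorm q.fst
  nlinarith [norm_nonneg (ContinuousLinearMap.adjoint L q.snd), norm_nonneg (L q.fst),
    mul_nonneg (norm_nonneg L) (norm_nonneg q.snd), mul_nonneg (norm_nonneg L) (norm_nonneg q.fst)]

lemma mem_zerosAdd_primalDualOp_iff {L : H →L[ℝ] G} {q : WithLp 2 (H × G)} :
    q ∈ zerosAdd (primalDualOp f g z r) (skewOp L) ↔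
      z - ContinuousLinearMap.adjoint L q.snd ∈ subdiff f q.fst ∧
        L q.fst - r ∈ subdiff (conjFn g) q.snd := by
  constructor
  · rintro ⟨w, ⟨h₁, h₂⟩, hw⟩
    obtain rfl := eq_neg_of_add_eq_zero_left hw
    simp only [WithLp.neg_fst, WithLp.neg_snd, skewOp_fst, skewOp_snd, neg_neg] at h₁ h₂
    exact ⟨by rwa [neg_add_eq_sub] at h₁, h₂⟩
  · rintro ⟨h₁, h₂⟩
    refine ⟨-skewOp L q, ⟨?_, ?_⟩, neg_add_cancel _⟩
    · simpa [neg_add_eq_sub] using h₁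
    · simpa using h₂

lemma primal_optimal (hf : ProperFn f) (hg : ProperFn g) {L : H →L[ℝ] G} {x : H} {v : G}
    (hfx : z - ContinuousLinearMap.adjoint L v ∈ subdiff f x) (hgx : v ∈ subdiff g (L x - r))
    (x' : H) :
    f x + g (L x - r) - (⟪x, z⟫_ℝ : EReal) ≤
      f x' + g (L x' - r) - (⟪x', z⟫_ℝ : EReal) := by
  obtain ⟨a, ha⟩ := hf.exists_eq_coe_of_mem_subdiff hfx
  obtain ⟨b, hb⟩ := hg.exists_eq_coe_of_mem_subdiff hgx
  refine le_trans (le_of_eq ?_) (EReal.sub_le_sub (add_le_add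
    (coe_inner_add_le_of_mem_subdiff hfx ha x') (coe_inner_add_le_of_mem_subdiff hgx hb _)) le_rfl)
  rw [ha, hb, ← EReal.coe_add, ← EReal.coe_add, ← EReal.coe_sub, ← EReal.coe_sub]
  congr 1
  simp only [inner_sub_left, inner_sub_right, ContinuousLinearMap.adjoint_inner_right, map_sub]
  ring

lemma dual_optimal (hf : ProperFn f) (hg : ProperFn g) {L : H →L[ℝ] G} {x : H} {v : G}
    (hfx : z - ContinuousLinearMap.adjoint L v ∈ subdiff f x) (hgx : v ∈ subdiff g (L x - r))
    (v' : G) :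
    conjFn f (z - ContinuousLinearMap.adjoint L v) + conjFn g v + (⟪v, r⟫_ℝ : EReal) ≤
      conjFn f (z - ContinuousLinearMap.adjoint L v') + conjFn g v' +
        (⟪v', r⟫_ℝ : EReal) := by
  obtain ⟨a, ha⟩ := hf.exists_eq_coe_of_mem_subdiff hfx
  obtain ⟨b, hb⟩ := hg.exists_eq_coe_of_mem_subdiff hgx
  have hfx' := mem_subdiff_conjFn_of_mem_subdiff hfx ha
  have hgx' := mem_subdiff_conjFn_of_mem_subdiff hgx hb
  refine le_trans (le_of_eq ?_) (add_le_add (add_le_add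
    (coe_inner_add_le_of_mem_subdiff hfx' (conjFn_eq_of_mem_subdiff hfx ha) _)
    (coe_inner_add_le_of_mem_subdiff hgx' (conjFn_eq_of_mem_subdiff hgx hb) v')) le_rfl)
  rw [conjFn_eq_of_mem_subdiff hfx ha, conjFn_eq_of_mem_subdiff hgx hb, ← EReal.coe_add,
    ← EReal.coe_add, ← EReal.coe_add, ← EReal.coe_add]
  congr 1
  simp only [inner_sub_left, inner_sub_right, ContinuousLinearMap.adjoint_inner_left,
    real_inner_comm]
  ring

end PrimalDual

theorem stmt_19_general {H G : Type*} [NormedAddCommGroup H] [InnerProductSpace ℝ H] [CompleteSpace H]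
    [NormedAddCommGroup G] [InnerProductSpace ℝ G] [CompleteSpace G]
    (f : H → EReal) (hf : ProperFn f)
    (g : G → EReal) (hg : ProperFn g) (hglsc : LowerSemicontinuous g) (hgcvx : ConvexFn g)
    (L : H →L[ℝ] G) (hL : L ≠ 0) (z : H) (r : G)
    (hran : ∃ x : H, ∃ u ∈ subdiff f x, ∃ w ∈ subdiff g (L x - r),
      z = u + ContinuousLinearMap.adjoint L w)
    (a₁ b₁ c₁ : ℕ → H) (a₂ b₂ c₂ : ℕ → G)
    (ha₁ : Summable fun n => ‖a₁ n‖) (hb₁ : Summable fun n => ‖b₁ n‖)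
    (hc₁ : Summable fun n => ‖c₁ n‖)
    (ha₂ : Summable fun n => ‖a₂ n‖) (hb₂ : Summable fun n => ‖b₂ n‖)
    (hc₂ : Summable fun n => ‖c₂ n‖)
    (ε : ℝ) (hε : ε ∈ Set.Ioo (0:ℝ) (1 / (‖L‖ + 1)))
    (γ : ℕ → ℝ) (hγ : ∀ n, γ n ∈ Set.Icc ε ((1 - ε) / ‖L‖))
    (proxf : ℕ → H → H) (hproxf : ∀ n, IsResolvent (γ n) (subdiff f) (proxf n))
    (proxg : ℕ → G → G) (hproxg : ∀ n, IsResolvent (γ n) (subdiff (conjFn g)) (proxg n))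
    (x y₁ p₁ q₁ : ℕ → H) (v y₂ p₂ q₂ : ℕ → G)
    (hy₁ : ∀ n, y₁ n = x n - γ n • (ContinuousLinearMap.adjoint L (v n) + a₁ n))
    (hy₂ : ∀ n, y₂ n = v n + γ n • (L (x n) + a₂ n))
    (hp₁ : ∀ n, p₁ n = proxf n (y₁ n + γ n • z) + b₁ n)
    (hp₂ : ∀ n, p₂ n = proxg n (y₂ n - γ n • r) + b₂ n)
    (hq₁ : ∀ n, q₁ n = p₁ n - γ n • (ContinuousLinearMap.adjoint L (p₂ n) + c₁ n))
    (hq₂ : ∀ n, q₂ n = p₂ n + γ n • (L (p₁ n) + c₂ n))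
    (hx : ∀ n, x (n + 1) = x n - y₁ n + q₁ n)
    (hv : ∀ n, v (n + 1) = v n - y₂ n + q₂ n) :
    ∃ (xb : H) (vb : G),
      (∀ x' : H, f xb + g (L xb - r) - (⟪xb, z⟫_ℝ : EReal) ≤
        f x' + g (L x' - r) - (⟪x', z⟫_ℝ : EReal)) ∧
      (∀ v' : G, conjFn f (z - ContinuousLinearMap.adjoint L vb) + conjFn g vb +
          (⟪vb, r⟫_ℝ : EReal) ≤
        conjFn f (z - ContinuousLinearMap.adjoint L v') + conjFn g v' +
          (⟪v', r⟫_ℝ : EReal)) ∧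
      z - ContinuousLinearMap.adjoint L vb ∈ subdiff f xb ∧
      vb ∈ subdiff g (L xb - r) ∧
      WeakTendsto x xb ∧ WeakTendsto p₁ xb ∧ WeakTendsto v vb ∧ WeakTendsto p₂ vb ∧
      Filter.Tendsto (fun n => x n - p₁ n) Filter.atTop (nhds 0) ∧
      Filter.Tendsto (fun n => v n - p₂ n) Filter.atTop (nhds 0) := by
  obtain ⟨x₀, u₀, hu₀, w₀, hw₀, hz⟩ := hran
  have hzero : WithLp.toLp 2 (x₀, w₀) ∈ zerosAdd (primalDualOp f g z r) (skewOp L) := by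
    obtain ⟨b, hb⟩ := hg.exists_eq_coe_of_mem_subdiff hw₀
    exact mem_zerosAdd_primalDualOp_iff.2
      ⟨by simpa [hz] using hu₀, mem_subdiff_conjFn_of_mem_subdiff hw₀ hb⟩
  obtain ⟨q, hq, hweak, hstrong⟩ := exists_mem_zerosAdd_weakTendsto_tseng
    (X := fun n => WithLp.toLp 2 (x n, v n)) (P := fun n => WithLp.toLp 2 (p₁ n, p₂ n))
    (EA := fun n => WithLp.toLp 2 (a₁ n, -a₂ n)) (EB := fun n => WithLp.toLp 2 (b₁ n, b₂ n))
    (EC := fun n => WithLp.toLp 2 (c₁ n, -c₂ n))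
    (monotoneOp_primalDualOp hf (hg.conjFn hglsc hgcvx)) (inner_skewOp_self L)
    (norm_pos_iff.2 hL) (norm_skewOp_le L) hε.1 hγ
    (fun n => isResolvent_primalDualOp (hproxf n) (hproxg n)) ⟨_, hzero⟩
    (summable_norm_toLp ha₁ (by simpa using ha₂)) (summable_norm_toLp hb₁ hb₂)
    (summable_norm_toLp hc₁ (by simpa using hc₂))
    (fun n => WithLp.prod_ext (by simp [hp₁, hy₁]) (by simp [hp₂, hy₂]; congr 2; module))
    (fun n => WithLp.prod_ext (by simp [hx, hy₁, hq₁]) (by simp [hv, hy₂, hq₂]; module))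
  obtain ⟨hfq, hgq⟩ := mem_zerosAdd_primalDualOp_iff.1 hq
  have hgq' := mem_subdiff_of_mem_subdiff_conjFn hg hglsc hgcvx hgq
  have hxp : Tendsto (fun n => x n - p₁ n) atTop (𝓝 0) := by
    simpa [Function.comp_def] using ((WithLp.continuous_fst 2 H G).tendsto 0).comp hstrong
  have hvp : Tendsto (fun n => v n - p₂ n) atTop (𝓝 0) := by
    simpa [Function.comp_def] using ((WithLp.continuous_snd 2 H G).tendsto 0).comp hstrong
  exact ⟨q.fst, q.snd, primal_optimal hf hg hfq hgq', dual_optimal hf hg hfq hgq', hfq, hgq',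
    hweak.fst, tendsto_inner_of_tendsto_sub hweak.fst hxp, hweak.snd,
    tendsto_inner_of_tendsto_sub hweak.snd hvp, hxp, hvp⟩

theorem stmt_19 {H G : Type*} [NormedAddCommGroup H] [InnerProductSpace ℝ H] [CompleteSpace H]
    [NormedAddCommGroup G] [InnerProductSpace ℝ G] [CompleteSpace G]
    (f : H → EReal) (hf : ProperFn f) (hflsc : LowerSemicontinuous f) (hfcvx : ConvexFn f)
    (g : G → EReal) (hg : ProperFn g) (hglsc : LowerSemicontinuous g) (hgcvx : ConvexFn g)
    (L : H →L[ℝ] G) (hL : L ≠ 0) (z : H) (r : G)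
    (hran : ∃ x : H, ∃ u ∈ subdiff f x, ∃ w ∈ subdiff g (L x - r),
      z = u + ContinuousLinearMap.adjoint L w)
    (a₁ b₁ c₁ : ℕ → H) (a₂ b₂ c₂ : ℕ → G)
    (ha₁ : Summable fun n => ‖a₁ n‖) (hb₁ : Summable fun n => ‖b₁ n‖)
    (hc₁ : Summable fun n => ‖c₁ n‖)
    (ha₂ : Summable fun n => ‖a₂ n‖) (hb₂ : Summable fun n => ‖b₂ n‖)
    (hc₂ : Summable fun n => ‖c₂ n‖)
    (ε : ℝ) (hε : ε ∈ Set.Ioo (0:ℝ) (1 / (‖L‖ + 1)))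
    (γ : ℕ → ℝ) (hγ : ∀ n, γ n ∈ Set.Icc ε ((1 - ε) / ‖L‖))
    (proxf : ℕ → H → H) (hproxf : ∀ n, IsResolvent (γ n) (subdiff f) (proxf n))
    (proxg : ℕ → G → G) (hproxg : ∀ n, IsResolvent (γ n) (subdiff (conjFn g)) (proxg n))
    (x y₁ p₁ q₁ : ℕ → H) (v y₂ p₂ q₂ : ℕ → G)
    (hy₁ : ∀ n, y₁ n = x n - γ n • (ContinuousLinearMap.adjoint L (v n) + a₁ n))
    (hy₂ : ∀ n, y₂ n = v n + γ n • (L (x n) + a₂ n))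
    (hp₁ : ∀ n, p₁ n = proxf n (y₁ n + γ n • z) + b₁ n)
    (hp₂ : ∀ n, p₂ n = proxg n (y₂ n - γ n • r) + b₂ n)
    (hq₁ : ∀ n, q₁ n = p₁ n - γ n • (ContinuousLinearMap.adjoint L (p₂ n) + c₁ n))
    (hq₂ : ∀ n, q₂ n = p₂ n + γ n • (L (p₁ n) + c₂ n))
    (hx : ∀ n, x (n + 1) = x n - y₁ n + q₁ n)
    (hv : ∀ n, v (n + 1) = v n - y₂ n + q₂ n) :
    ∃ (xb : H) (vb : G),
      (∀ x' : H, f xb + g (L xb - r) - (⟪xb, z⟫_ℝ : EReal) ≤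
        f x' + g (L x' - r) - (⟪x', z⟫_ℝ : EReal)) ∧
      (∀ v' : G, conjFn f (z - ContinuousLinearMap.adjoint L vb) + conjFn g vb +
          (⟪vb, r⟫_ℝ : EReal) ≤
        conjFn f (z - ContinuousLinearMap.adjoint L v') + conjFn g v' +
          (⟪v', r⟫_ℝ : EReal)) ∧
      z - ContinuousLinearMap.adjoint L vb ∈ subdiff f xb ∧
      vb ∈ subdiff g (L xb - r) ∧
      WeakTendsto x xb ∧ WeakTendsto p₁ xb ∧ WeakTendsto v vb ∧ WeakTendsto p₂ vb ∧
      Filter.Tendsto (fun n => x n - p₁ n) Filter.atTop (nhds 0) ∧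
      Filter.Tendsto (fun n => v n - p₂ n) Filter.atTop (nhds 0) :=
  stmt_19_general f hf g hg hglsc hgcvx L hL z r hran a₁ b₁ c₁ a₂ b₂ c₂ ha₁ hb₁ hc₁ ha₂ hb₂ hc₂ ε hε
    γ hγ proxf hproxf proxg hproxg x y₁ p₁ q₁ v y₂ p₂ q₂ hy₁ hy₂ hp₁ hp₂ hq₁ hq₂ hx hv
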